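/- Stopped supermartingale: assume 𝒮 satisfies Assumption (L)-a.e. If (f_j)_{j≥0} is a supermartingale and τ is a stopping time on 𝒮, then the stopped sequence f^τ_j(S) = f_{min(τ(S), j)}(S) is a supermartingale. -/

import Mathlib

open Filter Set
open scoped Classical ENNReal

noncomputable section

abbrev Traj := ℕ → ℝ

/-- Portfolio value `Π^{V,H}_{j,n}`. -/
def PiVal (j n : ℕ) (V : ℝ) (H : ℕ → Traj → ℝ) (y : Traj) : ℝ :=
  V + ∑ i ∈ Finset.Ico j n, H i y * (y (i + 1) - y i)

/-- Non-anticipativity of a sequence of functions on a set of trajectories. -/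
def NonAnticipOn (A : Set Traj) (H : ℕ → Traj → ℝ) : Prop :=
  ∀ i, ∀ x ∈ A, ∀ y ∈ A, (∀ k ≤ i, x k = y k) → H i x = H i y

/-- Non-anticipativity (at time `j`) of a single extended-real-valued function. -/
def NonAnticipF (A : Set Traj) (j : ℕ) (g : Traj → EReal) : Prop :=
  ∀ x ∈ A, ∀ y ∈ A, (∀ k ≤ j, x k = y k) → g x = g y

/-- Conditional space `𝒮_{(x,j)}`. -/
def Cond (𝒮 : Set Traj) (x : Traj) (j : ℕ) : Set Traj :=
  {y ∈ 𝒮 | ∀ i ≤ j, y i = x i}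

/-- `liminf_{n→∞} Π^{V,H}_{j,n}` as a value in `[0,∞]`. -/
def limInfVal (j : ℕ) (V : ℝ) (H : ℕ → Traj → ℝ) (y : Traj) : ℝ≥0∞ :=
  Filter.liminf (fun n => ENNReal.ofReal (PiVal j n V H y)) Filter.atTop

/-- The conditional null operator `Ī_j` on a set `A` of trajectories. -/
def IUpOn (A : Set Traj) (j : ℕ) (f : Traj → ℝ≥0∞) : ℝ≥0∞ :=
  sInf { c | ∃ (V : ℕ → ℝ) (H : ℕ → ℕ → Traj → ℝ),
    (∀ m, NonAnticipOn A (H m)) ∧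
    (∀ m n, ∀ y ∈ A, 0 ≤ PiVal j n (V m) (H m) y) ∧
    (∀ y ∈ A, f y ≤ ∑' m, limInfVal j (V m) (H m) y) ∧
    c = ∑' m, ENNReal.ofReal (V m) }

/-- `Ī_j f (x)`, conditioned on the node `(x,j)`. -/
def IUp (𝒮 : Set Traj) (j : ℕ) (f : Traj → ℝ≥0∞) (x : Traj) : ℝ≥0∞ :=
  IUpOn (Cond 𝒮 x j) j f

/-- The conditional superhedging outer integral on a set `A`, starting at time `j`. -/
def sigmaUpOn (A : Set Traj) (j : ℕ) (f : Traj → EReal) : EReal :=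
  sInf { c : EReal | ∃ (V0 : ℝ) (H0 : ℕ → Traj → ℝ) (n0 : ℕ) (V : ℕ → ℝ)
      (H : ℕ → ℕ → Traj → ℝ),
    NonAnticipOn A H0 ∧ (∀ m, NonAnticipOn A (H m)) ∧
    (∀ m n, ∀ y ∈ A, 0 ≤ PiVal j n (V m) (H m) y) ∧
    (∀ y ∈ A, f y ≤ (PiVal j n0 V0 H0 y : EReal) +
      ((∑' m, limInfVal j (V m) (H m) y : ℝ≥0∞) : EReal)) ∧
    c = (V0 : EReal) + ((∑' m, ENNReal.ofReal (V m) : ℝ≥0∞) : EReal) }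

/-- `σ̄_j f (x)`. -/
def sigmaUp (𝒮 : Set Traj) (j : ℕ) (f : Traj → EReal) (x : Traj) : EReal :=
  sigmaUpOn (Cond 𝒮 x j) j f

/-- `σ̲_j f (x) = -σ̄_j (-f)(x)`. -/
def sigmaDown (𝒮 : Set Traj) (j : ℕ) (f : Traj → EReal) (x : Traj) : EReal :=
  - sigmaUp 𝒮 j (fun y => - f y) x

/-- A set is `Ī`-null. -/
def NullSet (𝒮 : Set Traj) (E : Set Traj) : Prop :=
  IUpOn 𝒮 0 (fun y => if y ∈ E then 1 else 0) = 0

/-- A property holds `Ī`-almost everywhere on `𝒮`. -/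
def AEOn (𝒮 : Set Traj) (P : Traj → Prop) : Prop :=
  NullSet 𝒮 {y ∈ 𝒮 | ¬ P y}

/-- Property `(L_{(x,j)})`, continuity from below at the node `(x,j)`. -/
def PropL (𝒮 : Set Traj) (x : Traj) (j : ℕ) : Prop :=
  ∀ (V0 : ℝ) (H0 : ℕ → Traj → ℝ) (n0 : ℕ) (V : ℕ → ℝ) (H : ℕ → ℕ → Traj → ℝ),
    NonAnticipOn (Cond 𝒮 x j) H0 → (∀ m, NonAnticipOn (Cond 𝒮 x j) (H m)) →
    (∀ m n, ∀ y ∈ Cond 𝒮 x j, 0 ≤ PiVal j n (V m) (H m) y) →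
    (∀ y ∈ Cond 𝒮 x j, (PiVal j n0 V0 H0 y : EReal) ≤
      ((∑' m, limInfVal j (V m) (H m) y : ℝ≥0∞) : EReal)) →
    (V0 : EReal) ≤ ((∑' m, ENNReal.ofReal (V m) : ℝ≥0∞) : EReal)

/-- Assumption `(L)`-a.e. -/
def LaeAssumption (𝒮 : Set Traj) : Prop :=
  (∀ x ∈ 𝒮, PropL 𝒮 x 0) ∧ NullSet 𝒮 {x ∈ 𝒮 | ∃ j, ¬ PropL 𝒮 x j}

/-- Up-down node. -/
def UpDownNode (𝒮 : Set Traj) (x : Traj) (j : ℕ) : Prop :=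
  (∃ y ∈ Cond 𝒮 x j, x j < y (j + 1)) ∧ (∃ y ∈ Cond 𝒮 x j, y (j + 1) < x j)

/-- Flat node. -/
def FlatNode (𝒮 : Set Traj) (x : Traj) (j : ℕ) : Prop :=
  ∀ y ∈ Cond 𝒮 x j, y (j + 1) = x j

/-- Arbitrage node. -/
def ArbitrageNode (𝒮 : Set Traj) (x : Traj) (j : ℕ) : Prop :=
  ¬ UpDownNode 𝒮 x j ∧ ¬ FlatNode 𝒮 x j

/-- Type II arbitrage node. -/
def TypeIINode (𝒮 : Set Traj) (x : Traj) (j : ℕ) : Prop :=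
  ArbitrageNode 𝒮 x j ∧ ¬ ∃ y ∈ Cond 𝒮 x j, y (j + 1) = x j

/-- Trajectory based stopping time. -/
def StoppingTime (𝒮 : Set Traj) (τ : Traj → ℕ∞) : Prop :=
  ∀ x ∈ 𝒮, ∀ y ∈ 𝒮, (∀ k : ℕ, (k : ℕ∞) ≤ τ x → x k = y k) → τ x = τ y

/-- `⊤`-dominant addition on `EReal`, implementing the convention `∞ + (−∞) = ∞`. -/
def eadd (a b : EReal) : EReal := if a = ⊤ ∨ b = ⊤ then ⊤ else a + b

/-- Subtraction `u − v = u + (−v)` with the convention `∞ + (−∞) = ∞`. -/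
def esub (a b : EReal) : EReal := eadd a (-b)

/-- Supermartingale. -/
def TrajSupermartingale (𝒮 : Set Traj) (f : ℕ → Traj → EReal) : Prop :=
  (∀ j, NonAnticipF 𝒮 j (f j)) ∧
  ∀ j, AEOn 𝒮 (fun x => sigmaUp 𝒮 j (f (j + 1)) x ≤ f j x)

/-!
The stopped process needs no hedging argument. At a node `(x, j)` with `τ x ≤ j` the stopping
time is already decided on the whole cone `Cond 𝒮 x j`, where the stopped value at time `j + 1`
is then the constant `f_{τ x}(x)`, and `σ̄_j` of a constant is at most that constant. At a node
with `j < τ x` every trajectory of the cone is still running, so the stopped process agrees with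
`f` at times `j` and `j + 1` there, and `σ̄_j` only sees the cone.
-/

lemma sigmaUpOn_congr {A : Set Traj} {j : ℕ} {g h : Traj → EReal}
    (hgh : ∀ y ∈ A, g y = h y) : sigmaUpOn A j g = sigmaUpOn A j h := by
  unfold sigmaUpOn
  congr 1
  ext c
  constructor <;> rintro ⟨V0, H0, n0, V, H, hH0, hH, hpos, hcover, rfl⟩
  · exact ⟨V0, H0, n0, V, H, hH0, hH, hpos, fun y hy => hgh y hy ▸ hcover y hy, rfl⟩
  · exact ⟨V0, H0, n0, V, H, hH0, hH, hpos, fun y hy => (hgh y hy).symm ▸ hcover y hy, rfl⟩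

lemma sigmaUpOn_le_coe {A : Set Traj} {j : ℕ} {g : Traj → EReal} {r : ℝ}
    (hg : ∀ y ∈ A, g y ≤ r) : sigmaUpOn A j g ≤ r := by
  -- the constant superhedge: initial capital `r`, no trading
  apply sInf_le
  refine ⟨r, fun _ _ => 0, j, fun _ => 0, fun _ _ _ => 0,
    fun _ _ _ _ _ _ => rfl, fun _ _ _ _ _ _ _ => rfl, fun _ _ _ _ => by simp [PiVal],
    fun y hy => ?_, by simp⟩
  simpa [PiVal, limInfVal, Filter.liminf_const] using hg y hy

lemma sigmaUpOn_le_of_forall_le {A : Set Traj} {j : ℕ} {g : Traj → EReal} {c : EReal}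
    (hg : ∀ y ∈ A, g y ≤ c) : sigmaUpOn A j g ≤ c :=
  EReal.le_of_forall_lt_iff_le.1 fun _ hr =>
    sigmaUpOn_le_coe fun y hy => (hg y hy).trans hr.le

lemma IUpOn_mono {A : Set Traj} {j : ℕ} {f g : Traj → ℝ≥0∞}
    (h : ∀ y ∈ A, f y ≤ g y) : IUpOn A j f ≤ IUpOn A j g := by
  apply sInf_le_sInf
  rintro c ⟨V, H, hH, hpos, hcover, rfl⟩
  exact ⟨V, H, hH, hpos, fun y hy => (h y hy).trans (hcover y hy), rfl⟩

lemma NullSet.mono {𝒮 E E' : Set Traj} (hE : NullSet 𝒮 E) (hsub : E' ⊆ E) :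
    NullSet 𝒮 E' := by
  refine nonpos_iff_eq_zero.1 ((IUpOn_mono fun y _ => ?_).trans_eq hE)
  by_cases hy : y ∈ E'
  · simp [hy, hsub hy]
  · simp [hy]

lemma AEOn.mono {𝒮 : Set Traj} {P Q : Traj → Prop} (hP : AEOn 𝒮 P)
    (hPQ : ∀ x ∈ 𝒮, P x → Q x) : AEOn 𝒮 Q :=
  NullSet.mono hP fun x ⟨hx, hQ⟩ => ⟨hx, fun hPx => hQ (hPQ x hx hPx)⟩

namespace StoppingTime

variable {𝒮 : Set Traj} {τ : Traj → ℕ∞} {x y : Traj} {j : ℕ}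

lemma eq_of_le (hτ : StoppingTime 𝒮 τ) (hx : x ∈ 𝒮) (hy : y ∈ 𝒮)
    (hxy : ∀ k ≤ j, x k = y k) (hle : τ x ≤ j) : τ x = τ y :=
  hτ x hx y hy fun k hk => hxy k (by exact_mod_cast hk.trans hle)

lemma le_iff (hτ : StoppingTime 𝒮 τ) (hx : x ∈ 𝒮) (hy : y ∈ 𝒮)
    (hxy : ∀ k ≤ j, x k = y k) : τ x ≤ j ↔ τ y ≤ j :=
  ⟨fun h => hτ.eq_of_le hx hy hxy h ▸ h,
    fun h => hτ.eq_of_le hy hx (fun k hk => (hxy k hk).symm) h ▸ h⟩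

end StoppingTime

def stopped (τ : Traj → ℕ∞) (f : ℕ → Traj → EReal) (j : ℕ) (x : Traj) : EReal :=
  f (min (τ x) j).toNat x

section Stopped

variable {τ : Traj → ℕ∞} {f : ℕ → Traj → EReal} {j : ℕ} {x : Traj}

lemma stopped_of_le (h : τ x ≤ j) : stopped τ f j x = f (τ x).toNat x := by
  rw [stopped, min_eq_left h]

lemma stopped_of_ge (h : (j : ℕ∞) ≤ τ x) : stopped τ f j x = f j x := by
  rw [stopped, min_eq_right h, ENat.toNat_natCast]

lemma stopped_succ_of_le (h : τ x ≤ j) : stopped τ f (j + 1) x = stopped τ f j x := by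
  rw [stopped_of_le h, stopped_of_le (h.trans (by exact_mod_cast j.le_succ))]

variable {𝒮 : Set Traj}

lemma nonAnticipF_stopped (hf : ∀ j, NonAnticipF 𝒮 j (f j)) (hτ : StoppingTime 𝒮 τ)
    (j : ℕ) : NonAnticipF 𝒮 j (stopped τ f j) := by
  intro x hx y hy hxy
  by_cases hle : τ x ≤ j
  · have hτxy := hτ.eq_of_le hx hy hxy hle
    rw [stopped_of_le hle, stopped_of_le (hτxy ▸ hle), ← hτxy]
    exact hf _ x hx y hy fun k hk => hxy k (hk.trans (ENat.toNat_le_of_le_natCast hle))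
  · have hyle := mt (hτ.le_iff hx hy hxy).2 hle
    rw [stopped_of_ge (le_of_not_ge hle), stopped_of_ge (le_of_not_ge hyle)]
    exact hf j x hx y hy hxy

lemma sigmaUp_stopped_le (hf : ∀ j, NonAnticipF 𝒮 j (f j)) (hτ : StoppingTime 𝒮 τ)
    (hx : x ∈ 𝒮) (hsuper : sigmaUp 𝒮 j (f (j + 1)) x ≤ f j x) :
    sigmaUp 𝒮 j (stopped τ f (j + 1)) x ≤ stopped τ f j x := by
  by_cases hle : τ x ≤ j
  · refine sigmaUpOn_le_of_forall_le fun y ⟨hy, hyx⟩ => le_of_eq ?_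
    rw [stopped_succ_of_le ((hτ.le_iff hy hx hyx).2 hle)]
    exact nonAnticipF_stopped hf hτ j y hy x hx hyx
  · have hrun : ∀ y ∈ Cond 𝒮 x j, ((j + 1 : ℕ) : ℕ∞) ≤ τ y := fun y ⟨hy, hyx⟩ => by
      have hyle := mt (hτ.le_iff hy hx hyx).1 hle
      exact_mod_cast Order.add_one_le_of_lt (lt_of_not_ge hyle)
    rw [sigmaUp, sigmaUpOn_congr fun y hy => stopped_of_ge (hrun y hy),
      stopped_of_ge (le_of_not_ge hle)]
    exact hsuper

end Stopped

theorem stopped_supermartingale_general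
    (𝒮 : Set Traj)
    (f : ℕ → Traj → EReal) (hf : TrajSupermartingale 𝒮 f)
    (τ : Traj → ℕ∞) (hτ : StoppingTime 𝒮 τ) :
    TrajSupermartingale 𝒮 (fun j x => f (min (τ x) (j : ℕ∞)).toNat x) := by
  obtain ⟨hfa, hfs⟩ := hf
  show TrajSupermartingale 𝒮 (stopped τ f)
  exact ⟨nonAnticipF_stopped hfa hτ,
    fun j => (hfs j).mono fun x hx => sigmaUp_stopped_le hfa hτ hx⟩

/-- a stopped supermartingale is a supermartingale, under
Assumption (L)-a.e. -/
theorem stopped_supermartingale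
    (𝒮 : Set Traj) (hL : LaeAssumption 𝒮)
    (f : ℕ → Traj → EReal) (hf : TrajSupermartingale 𝒮 f)
    (τ : Traj → ℕ∞) (hτ : StoppingTime 𝒮 τ) :
    TrajSupermartingale 𝒮 (fun j x => f (min (τ x) (j : ℕ∞)).toNat x) :=
  stopped_supermartingale_general 𝒮 f hf τ hτ

end
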